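/- Let ε = (ε_ij) be a smooth symmetric second-order tensor field on ℝ³ and let W_ijkl = ∂_l∂_k ε_ij − ∂_l∂_i ε_jk + ∂_i∂_j ε_kl − ∂_k∂_j ε_il be its Saint-Venant tensor. Then ∂_i W_kjml + ∂_k W_mjil + ∂_m W_ijkl = 0 for all indices i, j, k, l, m ∈ {1,2,3} and all points of ℝ³ (that is, D₃ ∘ D₂ = 0 in the Elasticity complex). -/

import Mathlib

/-- The partial derivative `∂_i f` of a scalar field on `ℝ³`. -/
noncomputable def pd (i : Fin 3) (f : (Fin 3 → ℝ) → ℝ) : (Fin 3 → ℝ) → ℝ :=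
  fun x => fderiv ℝ f x (Pi.single i 1)

/-- The Saint-Venant tensor
`W_ijkl = ∂_l∂_k ε_ij − ∂_l∂_i ε_jk + ∂_i∂_j ε_kl − ∂_k∂_j ε_il`. -/
noncomputable def SV (ε : Fin 3 → Fin 3 → (Fin 3 → ℝ) → ℝ) (i j k l : Fin 3) :
    (Fin 3 → ℝ) → ℝ :=
  fun x => pd l (pd k (ε i j)) x - pd l (pd i (ε j k)) x
    + pd i (pd j (ε k l)) x - pd k (pd j (ε i l)) x

lemma pd_contDiff {f : (Fin 3 → ℝ) → ℝ} (hf : ContDiff ℝ (⊤ : ℕ∞) f) (i : Fin 3) :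
    ContDiff ℝ (⊤ : ℕ∞) (pd i f) :=
  (hf.fderiv_right ((by simp))).clm_apply contDiff_const

lemma pd_comm {f : (Fin 3 → ℝ) → ℝ} (hf : ContDiff ℝ (⊤ : ℕ∞) f) (a b : Fin 3) :
    pd a (pd b f) = pd b (pd a f) := by
  funext x
  have hd : ∀ v w : Fin 3 → ℝ,
      fderiv ℝ (fun y => fderiv ℝ f y v) x w
        = fderiv ℝ (fderiv ℝ f) x w v := by
    intro v w
    have hg : HasFDerivAt (fderiv ℝ f) (fderiv ℝ (fderiv ℝ f) x) x :=
      ((hf.fderiv_right (m := 1) ((WithTop.coe_le_coe.mpr le_top))).differentiable one_ne_zero x).hasFDerivAt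
    have h2 := ((ContinuousLinearMap.apply ℝ ℝ v).hasFDerivAt.comp x hg).fderiv
    rw [show (fun y => fderiv ℝ f y v)
        = (⇑(ContinuousLinearMap.apply ℝ ℝ v) ∘ fderiv ℝ f) from rfl, h2]
    rfl
  have hsymm : IsSymmSndFDerivAt ℝ f x :=
    (hf.contDiffAt).isSymmSndFDerivAt (by rw [minSmoothness_of_isRCLikeNormedField]; exact WithTop.coe_le_coe.mpr le_top)
  show fderiv ℝ (pd b f) x (Pi.single a 1) = fderiv ℝ (pd a f) x (Pi.single b 1)
  unfold pd
  rw [hd, hd]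
  exact hsymm _ _

/-- Swap the two outer derivatives. -/
lemma pd_swap12 {f : (Fin 3 → ℝ) → ℝ} (hf : ContDiff ℝ (⊤ : ℕ∞) f) (a b c : Fin 3) :
    pd a (pd b (pd c f)) = pd b (pd a (pd c f)) :=
  pd_comm (pd_contDiff hf c) a b

/-- Swap the outermost and innermost derivatives. -/
lemma pd_swap13 {f : (Fin 3 → ℝ) → ℝ} (hf : ContDiff ℝ (⊤ : ℕ∞) f) (a b c : Fin 3) :
    pd a (pd b (pd c f)) = pd c (pd b (pd a f)) := by
  rw [pd_comm (pd_contDiff hf c) a b, pd_comm hf a c,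
    pd_comm (pd_contDiff hf a) b c]

/-- `D₃ ∘ D₂ = 0` in the Elasticity complex: the Saint-Venant tensor `W` of a
smooth symmetric second-order tensor field satisfies
`∂_i W_kjml + ∂_k W_mjil + ∂_m W_ijkl = 0`. -/
theorem D3_comp_D2_eq_zero
    (ε : Fin 3 → Fin 3 → (Fin 3 → ℝ) → ℝ)
    (hsm : ∀ i j, ContDiff ℝ (⊤ : ℕ∞) (ε i j))
    (hsym : ∀ i j, ε i j = ε j i) :
    ∀ (i j k l m : Fin 3) (x : Fin 3 → ℝ),
      pd i (SV ε k j m l) x + pd k (SV ε m j i l) x + pd m (SV ε i j k l) x = 0 := by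
  intro i j k l m x
  have key : ∀ a b c d e : Fin 3,
      pd a (SV ε b c d e) x
        = pd a (pd e (pd d (ε b c))) x - pd a (pd e (pd b (ε c d))) x
          + pd a (pd b (pd c (ε d e))) x - pd a (pd d (pd c (ε b e))) x := by
    intro a b c d e
    have hA : DifferentiableAt ℝ (pd e (pd d (ε b c))) x :=
      ((pd_contDiff (pd_contDiff (hsm b c) d) e).differentiable (by simp)) x
    have hB : DifferentiableAt ℝ (pd e (pd b (ε c d))) x :=
      ((pd_contDiff (pd_contDiff (hsm c d) b) e).differentiable (by simp)) x
    have hC : DifferentiableAt ℝ (pd b (pd c (ε d e))) x :=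
      ((pd_contDiff (pd_contDiff (hsm d e) c) b).differentiable (by simp)) x
    have hD : DifferentiableAt ℝ (pd d (pd c (ε b e))) x :=
      ((pd_contDiff (pd_contDiff (hsm b e) c) d).differentiable (by simp)) x
    show fderiv ℝ (SV ε b c d e) x (Pi.single a 1) = _
    rw [show SV ε b c d e = fun y => pd e (pd d (ε b c)) y - pd e (pd b (ε c d)) y
        + pd b (pd c (ε d e)) y - pd d (pd c (ε b e)) y from rfl]
    rw [fderiv_fun_sub ((hA.fun_sub hB).fun_add hC) hD, fderiv_fun_add (hA.fun_sub hB) hC, fderiv_fun_sub hA hB]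
    simp only [ContinuousLinearMap.sub_apply, ContinuousLinearMap.add_apply]
    rfl
  rw [key, key, key]
  rw [show pd m (pd l (pd i (ε j k))) = pd i (pd l (pd m (ε k j))) by
      rw [hsym j k]; exact pd_swap13 (hsm k j) m l i,
    show pd k (pd l (pd i (ε m j))) = pd i (pd l (pd k (ε j m))) by
      rw [hsym m j]; exact pd_swap13 (hsm j m) k l i,
    show pd k (pd i (pd j (ε m l))) = pd i (pd k (pd j (ε m l))) from
      pd_swap12 (hsm m l) k i j,
    show pd m (pd i (pd j (ε k l))) = pd i (pd m (pd j (ε k l))) from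
      pd_swap12 (hsm k l) m i j,
    show pd k (pd l (pd m (ε j i))) = pd m (pd l (pd k (ε i j))) by
      rw [hsym j i]; exact pd_swap13 (hsm i j) k l m,
    show pd m (pd k (pd j (ε i l))) = pd k (pd m (pd j (ε i l))) from
      pd_swap12 (hsm i l) m k j]
  ring
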